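/- Let P be a finite poset, ω : P → {1,…,#P} a bijection and ρ : P → ℤ_{>0} a restriction such that (ω,ρ) satisfies condition (LF). Then there exists a labeled flag Φ on P such that the set of (P,Φ)-partitions equals the set of (P,ω,ρ)-partitions; one may take Φ(u) = (ρ(u), ω(u)). -/

import Mathlib

/-- `f : P → ℤ_{>0}` is a `(P,Φ)`-partition for the labeled flag `Φ`: for every cover
`u ⋖ v` one has `f u ≥ f v`, with `f u > f v` whenever `Φ u > Φ v` (lexicographically),
and `f u ≤ val (Φ u)` for all `u`. -/
def IsPhiPart {P : Type*} [PartialOrder P] (Φ : P → ℕ+ ×ₗ ℕ+) (f : P → ℕ+) : Prop :=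
  (∀ u v : P, u ⋖ v → f v ≤ f u ∧ (Φ v < Φ u → f v < f u)) ∧
  ∀ u : P, f u ≤ (ofLex (Φ u)).1

/-- `f : P → ℤ_{>0}` is a `(P,ω,ρ)`-partition: for every cover `u ⋖ v` one has
`f u ≥ f v`, with `f u > f v` whenever `ω u > ω v`, and `f u ≤ ρ u` for all `u`. -/
def IsRestPart {P : Type*} [Fintype P] [PartialOrder P]
    (ω : P ≃ Fin (Fintype.card P)) (ρ : P → ℕ+) (f : P → ℕ+) : Prop :=
  (∀ u v : P, u ⋖ v → f v ≤ f u ∧ (ω v < ω u → f v < f u)) ∧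
  ∀ u : P, f u ≤ ρ u

theorem toLex_lt_toLex_iff_of_refines {P α β : Type*} [LinearOrder α] [Preorder β]
    {ρ : P → α} {σ : P → β} (hρσ : ∀ u v, ρ v < ρ u → σ v < σ u) (u v : P) :
    toLex (ρ v, σ v) < toLex (ρ u, σ u) ↔ σ v < σ u := by
  rw [Prod.Lex.toLex_lt_toLex]
  refine ⟨fun h => h.elim (hρσ u v) And.right, fun hσ => ?_⟩
  rcases lt_trichotomy (ρ v) (ρ u) with hlt | heq | hgt
  · exact Or.inl hlt
  · exact Or.inr ⟨heq, hσ⟩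
  · exact absurd (hρσ v u hgt) (lt_asymm hσ)

theorem injective_toLex_prod_of_injective_right {P α β : Type*} (ρ : P → α) {σ : P → β}
    (hσ : Function.Injective σ) : Function.Injective fun u => toLex (ρ u, σ u) :=
  fun _ _ h => hσ (Prod.ext_iff.mp (toLex.injective h)).2

theorem isPhiPart_iff_isRestPart {P : Type*} [Fintype P] [PartialOrder P]
    {Φ : P → ℕ+ ×ₗ ℕ+} {ω : P ≃ Fin (Fintype.card P)} {ρ : P → ℕ+}
    (hlt : ∀ u v, Φ v < Φ u ↔ ω v < ω u) (hval : ∀ u, (ofLex (Φ u)).1 = ρ u) (f : P → ℕ+) :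
    IsPhiPart Φ f ↔ IsRestPart ω ρ f := by
  simp only [IsPhiPart, IsRestPart, hlt, hval]

/-- If `(ω,ρ)` satisfies condition (LF) (`ρ u > ρ v → ω u > ω v`), then there is a
labeled flag `Φ` on `P` — namely `Φ u = (ρ u, ω u)` — such that the `(P,Φ)`-partitions
are exactly the `(P,ω,ρ)`-partitions.  (Here the label `ω u ∈ Fin (#P) = {0,…,#P−1}`
is identified with the element `ω u + 1` of `{1,…,#P}`.) -/
theorem restPart_eq_phiPart {P : Type*} [Fintype P] [PartialOrder P]
    (ω : P ≃ Fin (Fintype.card P)) (ρ : P → ℕ+)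
    (hLF : ∀ u v : P, ρ v < ρ u → ω v < ω u) :
    ∃ Φ : P → ℕ+ ×ₗ ℕ+, Function.Injective Φ ∧
      Φ = (fun u => toLex (ρ u, ((ω u : ℕ)).succPNat)) ∧
      ∀ f : P → ℕ+, IsPhiPart Φ f ↔ IsRestPart ω ρ f := by
  set label : P → ℕ+ := fun u => ((ω u : ℕ)).succPNat
  have hlabel : ∀ u v, label v < label u ↔ ω v < ω u := fun _ _ => Nat.succPNat_lt_succPNat
  have hinj : Function.Injective label :=
    Nat.succPNat_injective.comp (Fin.val_injective.comp ω.injective)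
  refine ⟨_, injective_toLex_prod_of_injective_right ρ hinj, rfl,
    isPhiPart_iff_isRestPart (fun u v => ?_) (fun _ => rfl)⟩
  exact (toLex_lt_toLex_iff_of_refines (fun u v h => (hlabel u v).mpr (hLF u v h)) u v).trans
    (hlabel u v)
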